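/- arXiv:2509.09809 — 5 statements merged into one kernel-verified Lean document; each statement's English description precedes it below -/
import Mathlib

section
/- For every e ∈ [0,1) and θ ∈ [0, π], the integral ρ₀(e,θ) = ∫₀^θ (1 + e cos s)^{-2} ds satisfies θ/((1-e²)(1+e)) - e/((1-e²)(1-e)) ≤ ρ₀(e,θ) ≤ θ/(1-e²)^{3/2}. -/
set_option maxHeartbeats 1000000 in
/-- Bounds for `ρ₀(e,θ) = ∫₀^θ (1 + e cos s)⁻² ds` for `e ∈ [0,1)`, `θ ∈ [0,π]`. -/
theorem stmt3 (e θ : ℝ) (he : e ∈ Set.Ico (0:ℝ) 1) (hθ : θ ∈ Set.Icc 0 Real.pi) :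
    θ / ((1 - e ^ 2) * (1 + e)) - e / ((1 - e ^ 2) * (1 - e))
        ≤ ∫ s in (0:ℝ)..θ, ((1 + e * Real.cos s) ^ 2)⁻¹ ∧
    (∫ s in (0:ℝ)..θ, ((1 + e * Real.cos s) ^ 2)⁻¹) ≤ θ / (1 - e ^ 2) ^ ((3:ℝ)/2) := by
  obtain ⟨he0, he1⟩ := he
  obtain ⟨hθ0, hθπ⟩ := hθ
  have h1e : (0:ℝ) < 1 + e := by linarith
  have h1e' : (0:ℝ) < 1 - e := by linarith
  have he2 : (0:ℝ) < 1 - e ^ 2 := by nlinarith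
  set a := Real.sqrt (1 + e) with ha_def
  set b := Real.sqrt (1 - e) with hb_def
  have ha0 : 0 < a := Real.sqrt_pos.mpr h1e
  have hb0 : 0 < b := Real.sqrt_pos.mpr h1e'
  have ha : a ^ 2 = 1 + e := Real.sq_sqrt h1e.le
  have hb : b ^ 2 = 1 - e := Real.sq_sqrt h1e'.le
  have hk1' : b ≤ a := Real.sqrt_le_sqrt (by linarith)
  have habs : a * b = Real.sqrt (1 - e ^ 2) := by
    rw [show (1:ℝ) - e ^ 2 = (1 + e) * (1 - e) by ring, Real.sqrt_mul h1e.le, ha_def, hb_def]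
  set k := b / a with hk_def
  have hk0 : 0 < k := div_pos hb0 ha0
  have hk1 : k ≤ 1 := by rw [hk_def, div_le_one ha0]; exact hk1'
  have hk2 : k ^ 2 * (1 + e) = 1 - e := by
    rw [hk_def, div_pow, hb, ha]; field_simp
  have hab : k * (1 + e) = a * b := by
    rw [hk_def, ← ha]; field_simp
  have hp : (a * b) ^ 2 = 1 - e ^ 2 := by rw [mul_pow, ha, hb]; ring
  have h3ab : (a * b) ^ 3 = k * (1 + e) * (1 - e ^ 2) := by rw [← hp, hab]; ring
  have hab0 : 0 < (a * b) ^ 3 := by positivity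
  clear_value a b k
  have hcos : ∀ s : ℝ, 0 < 1 + e * Real.cos s := by
    intro s; nlinarith [Real.neg_one_le_cos s, Real.cos_le_one s]
  have hD : ∀ s : ℝ, 0 < (1 + k) + (1 - k) * Real.cos s := by
    intro s; nlinarith [Real.neg_one_le_cos s, Real.cos_le_one s]
  have hE : ∀ s : ℝ, 0 < (1 + k ^ 2) + (1 - k ^ 2) * Real.cos s := by
    intro s; nlinarith [Real.neg_one_le_cos s, Real.cos_le_one s, hk0]
  set A : ℝ → ℝ := fun t =>
    t - 2 * Real.arctan ((1 - k) * Real.sin t / ((1 + k) + (1 - k) * Real.cos t)) with hA_def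
  have hA : ∀ s : ℝ, HasDerivAt A (k * (1 + e) / (1 + e * Real.cos s)) s := by
    intro s
    have hs2 := Real.sin_sq_add_cos_sq s
    have hDs := hD s
    have hEs := hE s
    have hN : HasDerivAt (fun t => (1 - k) * Real.sin t) ((1 - k) * Real.cos s) s :=
      (Real.hasDerivAt_sin s).const_mul _
    have hDd : HasDerivAt (fun t => (1 + k) + (1 - k) * Real.cos t)
        ((1 - k) * (-Real.sin s)) s :=
      (((Real.hasDerivAt_cos s).const_mul _)).const_add _
    have hu : HasDerivAt (fun t => (1 - k) * Real.sin t / ((1 + k) + (1 - k) * Real.cos t))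
        ((1 - k) * ((1 - k) + (1 + k) * Real.cos s) /
          ((1 + k) + (1 - k) * Real.cos s) ^ 2) s := by
      refine (hN.div hDd hDs.ne').congr_deriv (Eq.symm ?_)
      congr 1
      linear_combination (-(1-k)^2) * hs2
    have harc := hu.arctan
    have h2 : 1 + ((1 - k) * Real.sin s / ((1 + k) + (1 - k) * Real.cos s)) ^ 2 =
        2 * ((1 + k ^ 2) + (1 - k ^ 2) * Real.cos s) /
          ((1 + k) + (1 - k) * Real.cos s) ^ 2 := by
      field_simp
      linear_combination ((1-k)^2) * hs2
    rw [h2] at harc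
    have harc2 : HasDerivAt
        (fun x => Real.arctan ((1 - k) * Real.sin x / ((1 + k) + (1 - k) * Real.cos x)))
        ((1 - k) * ((1 - k) + (1 + k) * Real.cos s) /
          (2 * ((1 + k ^ 2) + (1 - k ^ 2) * Real.cos s))) s := by
      convert harc using 1
      field_simp
    have hfull := (hasDerivAt_id s).sub (harc2.const_mul 2)
    have hcs := (hcos s).ne'
    refine hfull.congr_deriv (Eq.symm ?_)
    have hEs' : 1 + k ^ 2 + Real.cos s * (1 - k ^ 2) ≠ 0 := by rw [mul_comm]; exact hEs.ne'
    field_simp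
    linear_combination (k * (1 - Real.cos s)) * hk2
  set G : ℝ → ℝ := fun t =>
    A t / (a * b) ^ 3 - e * Real.sin t / ((1 - e ^ 2) * (1 + e * Real.cos t)) with hG_def
  have hG : ∀ s : ℝ, HasDerivAt G (((1 + e * Real.cos s) ^ 2)⁻¹) s := by
    intro s
    have hs2 := Real.sin_sq_add_cos_sq s
    have hcs := (hcos s).ne'
    have hnum : HasDerivAt (fun t => e * Real.sin t) (e * Real.cos s) s :=
      (Real.hasDerivAt_sin s).const_mul e
    have hden : HasDerivAt (fun t => (1 - e ^ 2) * (1 + e * Real.cos t))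
        ((1 - e ^ 2) * (e * (-Real.sin s))) s :=
      (((Real.hasDerivAt_cos s).const_mul e).const_add 1).const_mul _
    have hq := hnum.div hden (by positivity)
    have hfull := ((hA s).div_const ((a * b) ^ 3)).sub hq
    refine hfull.congr_deriv (Eq.symm ?_)
    rw [h3ab]
    have hke : k * (1 + e) ≠ 0 := by positivity
    have hT : k * (1 + e) / (1 + e * Real.cos s) / (k * (1 + e) * (1 - e ^ 2)) =
        ((1 - e ^ 2) * (1 + e * Real.cos s))⁻¹ := by
      field_simp
    rw [hT]
    have hnum2 : e * Real.cos s * ((1 - e ^ 2) * (1 + e * Real.cos s)) -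
        e * Real.sin s * ((1 - e ^ 2) * (e * -Real.sin s)) =
        (1 - e ^ 2) * (e * Real.cos s + e ^ 2) := by
      linear_combination (e ^ 2 * (1 - e ^ 2)) * hs2
    rw [hnum2]
    field_simp
    ring
  have c1 : Continuous fun s : ℝ => 1 + e * Real.cos s :=
    continuous_const.add (continuous_const.mul Real.continuous_cos)
  have hcont : Continuous fun s => ((1 + e * Real.cos s) ^ 2)⁻¹ :=
    (c1.pow 2).inv₀ fun s => pow_ne_zero 2 (hcos s).ne'
  have hcontA : Continuous fun s => k * (1 + e) / (1 + e * Real.cos s) :=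
    continuous_const.div c1 fun s => (hcos s).ne'
  have hintG : ∫ s in (0:ℝ)..θ, ((1 + e * Real.cos s) ^ 2)⁻¹ = G θ - G 0 :=
    intervalIntegral.integral_eq_sub_of_hasDerivAt (fun x _ => hG x)
      (hcont.intervalIntegrable 0 θ)
  have hG0 : G 0 = 0 := by simp [hG_def, hA_def]
  have hintA : ∫ s in (0:ℝ)..θ, k * (1 + e) / (1 + e * Real.cos s) = A θ - A 0 :=
    intervalIntegral.integral_eq_sub_of_hasDerivAt (fun x _ => hA x)
      (hcontA.intervalIntegrable 0 θ)
  have hA0 : A 0 = 0 := by simp [hA_def]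
  have hsinθ : 0 ≤ Real.sin θ := Real.sin_nonneg_of_nonneg_of_le_pi hθ0 hθπ
  -- A θ ≥ k θ
  have hAlow : k * θ ≤ A θ := by
    have h1 : k * θ = ∫ s in (0:ℝ)..θ, k := by
      simp [mul_comm]
    rw [h1]
    have h2 := intervalIntegral.integral_mono_on (μ := MeasureTheory.volume) hθ0
      (intervalIntegrable_const (c := k)) (hcontA.intervalIntegrable 0 θ)
      (fun s _ => by
        rw [le_div_iff₀ (hcos s)]
        nlinarith [mul_nonneg (mul_nonneg hk0.le he0) (sub_nonneg.mpr (Real.cos_le_one s))])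
    calc (∫ s in (0:ℝ)..θ, k) ≤ ∫ s in (0:ℝ)..θ, k * (1 + e) / (1 + e * Real.cos s) := h2
    _ = A θ - A 0 := hintA
    _ = A θ := by rw [hA0, sub_zero]
  -- A θ ≤ θ
  have hAup : A θ ≤ θ := by
    have hu0 : 0 ≤ (1 - k) * Real.sin θ / ((1 + k) + (1 - k) * Real.cos θ) :=
      div_nonneg (mul_nonneg (by linarith) hsinθ) (hD θ).le
    have harct : 0 ≤ Real.arctan ((1 - k) * Real.sin θ / ((1 + k) + (1 - k) * Real.cos θ)) := by
      have := Real.arctan_strictMono.monotone hu0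
      rwa [Real.arctan_zero] at this
    simp only [hA_def]
    linarith
  have hsin2 : 0 ≤ e * Real.sin θ / ((1 - e ^ 2) * (1 + e * Real.cos θ)) :=
    div_nonneg (mul_nonneg he0 hsinθ) (mul_nonneg he2.le (hcos θ).le)
  constructor
  · -- lower bound
    rw [hintG, hG0, sub_zero]
    have hGθ : G θ = A θ / (a * b) ^ 3 -
        e * Real.sin θ / ((1 - e ^ 2) * (1 + e * Real.cos θ)) := by
      simp only [hG_def]
    rw [hGθ]
    have t1 : θ / ((1 - e ^ 2) * (1 + e)) = k * θ / (a * b) ^ 3 := by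
      rw [h3ab]
      field_simp
    have t2 : e * Real.sin θ / ((1 - e ^ 2) * (1 + e * Real.cos θ)) ≤
        e / ((1 - e ^ 2) * (1 - e)) := by
      apply div_le_div₀ he0 (by nlinarith [Real.sin_le_one θ]) (by positivity)
      have hc1 : (0:ℝ) ≤ 1 + Real.cos θ := by linarith [Real.neg_one_le_cos θ]
      nlinarith [mul_nonneg (mul_nonneg he2.le he0) hc1]
    have t3 : k * θ / (a * b) ^ 3 ≤ A θ / (a * b) ^ 3 := by gcongr
    rw [t1]
    exact sub_le_sub t3 t2
  · -- upper bound
    rw [hintG, hG0, sub_zero]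
    have hr : (1 - e ^ 2) ^ ((3:ℝ)/2) = (a * b) ^ 3 := by
      rw [habs, Real.sqrt_eq_rpow, ← Real.rpow_natCast ((1 - e^2) ^ ((1:ℝ)/2)) 3,
        ← Real.rpow_mul he2.le]
      norm_num
    rw [hr]
    have t3 : A θ / (a * b) ^ 3 ≤ θ / (a * b) ^ 3 := by gcongr
    have hGθ : G θ = A θ / (a * b) ^ 3 -
        e * Real.sin θ / ((1 - e ^ 2) * (1 + e * Real.cos θ)) := by
      simp only [hG_def]
    rw [hGθ]
    exact (sub_le_self _ hsin2).trans t3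
end

section
/- For every e ∈ [0,1), the double integral ρ₂(e) = ∫₀^π ∫₀^θ (1 + e cos s)^{-1} ds dθ satisfies π²/2 - 2e ≤ ρ₂(e), and in particular ρ₂(e) ≥ π²/(2(1+e)). -/
open Real intervalIntegral

/-- Lower bounds for `ρ₂(e) = ∫₀^π ∫₀^θ (1 + e cos s)⁻¹ ds dθ` for `e ∈ [0,1)`:
`π²/2 - 2e ≤ ρ₂(e)` and in particular `π²/(2(1+e)) ≤ ρ₂(e)`. -/
theorem stmt4 (e : ℝ) (he : e ∈ Set.Ico (0:ℝ) 1) :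
    Real.pi ^ 2 / 2 - 2 * e ≤ (∫ θ in (0:ℝ)..Real.pi, ∫ s in (0:ℝ)..θ, (1 + e * Real.cos s)⁻¹) ∧
    Real.pi ^ 2 / (2 * (1 + e))
      ≤ ∫ θ in (0:ℝ)..Real.pi, ∫ s in (0:ℝ)..θ, (1 + e * Real.cos s)⁻¹ := by
  obtain ⟨he0, he1⟩ := he
  have hpos : ∀ s : ℝ, 0 < 1 + e * Real.cos s := by
    intro s
    nlinarith [Real.neg_one_le_cos s, Real.cos_le_one s, abs_nonneg (Real.cos s)]
  have hcont : Continuous fun s : ℝ => (1 + e * Real.cos s)⁻¹ := by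
    apply Continuous.inv₀ (by continuity)
    intro s; exact (hpos s).ne'
  have hint : ∀ a b : ℝ, IntervalIntegrable (fun s => (1 + e * Real.cos s)⁻¹)
      MeasureTheory.volume a b := fun a b => hcont.intervalIntegrable a b
  have hFcont : Continuous fun θ : ℝ => ∫ s in (0:ℝ)..θ, (1 + e * Real.cos s)⁻¹ :=
    intervalIntegral.continuous_primitive (fun a b => hint a b) 0
  have hFint : IntervalIntegrable (fun θ : ℝ => ∫ s in (0:ℝ)..θ, (1 + e * Real.cos s)⁻¹)
      MeasureTheory.volume 0 Real.pi := hFcont.intervalIntegrable 0 Real.pi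
  constructor
  · -- first bound
    have hbound : ∀ θ ∈ Set.Icc (0:ℝ) Real.pi,
        θ - e * Real.sin θ ≤ ∫ s in (0:ℝ)..θ, (1 + e * Real.cos s)⁻¹ := by
      intro θ hθ
      have hcalc : ∫ s in (0:ℝ)..θ, (1 - e * Real.cos s) = θ - e * Real.sin θ := by
        rw [intervalIntegral.integral_sub intervalIntegrable_const
          ((by fun_prop : Continuous fun s : ℝ => e * Real.cos s).intervalIntegrable 0 θ)]
        simp [intervalIntegral.integral_const_mul, integral_cos]
      rw [← hcalc]
      apply intervalIntegral.integral_mono_on hθ.1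
        ((by fun_prop : Continuous fun s : ℝ => 1 - e * Real.cos s).intervalIntegrable 0 θ)
        (hint 0 θ)
      intro s _
      have hps := hpos s
      rw [inv_eq_one_div, le_div_iff₀ hps]
      nlinarith [sq_nonneg (e * Real.cos s)]
    have hmono := intervalIntegral.integral_mono_on Real.pi_pos.le
      (((by fun_prop : Continuous fun θ : ℝ => θ - e * Real.sin θ)).intervalIntegrable 0 Real.pi)
      hFint hbound
    have hcalc2 : ∫ θ in (0:ℝ)..Real.pi, (θ - e * Real.sin θ) = Real.pi ^ 2 / 2 - 2 * e := by
      rw [intervalIntegral.integral_sub ((by fun_prop : Continuous fun θ : ℝ => θ).intervalIntegrable 0 Real.pi)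
        ((by fun_prop : Continuous fun θ : ℝ => e * Real.sin θ).intervalIntegrable 0 Real.pi)]
      simp [intervalIntegral.integral_const_mul, integral_sin, integral_id]
      ring
    linarith [hmono, hcalc2.symm.le]
  · -- second bound
    have hbound : ∀ θ ∈ Set.Icc (0:ℝ) Real.pi,
        θ * (1 + e)⁻¹ ≤ ∫ s in (0:ℝ)..θ, (1 + e * Real.cos s)⁻¹ := by
      intro θ hθ
      have hcalc : ∫ s in (0:ℝ)..θ, ((1 + e : ℝ))⁻¹ = θ * (1 + e)⁻¹ := by
        simp
      rw [← hcalc]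
      apply intervalIntegral.integral_mono_on hθ.1 intervalIntegrable_const (hint 0 θ)
      intro s _
      apply inv_anti₀ (hpos s)
      nlinarith [Real.cos_le_one s]
    have hmono := intervalIntegral.integral_mono_on Real.pi_pos.le
      (((by fun_prop : Continuous fun θ : ℝ => θ * (1 + e)⁻¹)).intervalIntegrable 0 Real.pi) hFint hbound
    have hcalc2 : ∫ θ in (0:ℝ)..Real.pi, θ * (1 + e)⁻¹ = Real.pi ^ 2 / (2 * (1 + e)) := by
      rw [intervalIntegral.integral_mul_const]
      simp [integral_id]
      field_simp
    linarith [hmono, hcalc2.symm.le]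
end

section
/- For every e ∈ [0,1), the double integral ρ₁(e) = ∫₀^π ∫₀^θ (1 + e cos s)^{-2} ds dθ satisfies ρ₁(e) ≤ π²/(2(1-e²)^{3/2}). -/
open Real intervalIntegral Set

set_option maxHeartbeats 1000000 in
/-- Upper bound for `ρ₁(e) = ∫₀^π ∫₀^θ (1 + e cos s)⁻² ds dθ` for `e ∈ [0,1)`:
`ρ₁(e) ≤ π²/(2(1-e²)^{3/2})`. -/
theorem stmt5 (e : ℝ) (he : e ∈ Set.Ico (0:ℝ) 1) :
    (∫ θ in (0:ℝ)..Real.pi, ∫ s in (0:ℝ)..θ, ((1 + e * Real.cos s) ^ 2)⁻¹)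
      ≤ Real.pi ^ 2 / (2 * (1 - e ^ 2) ^ ((3:ℝ)/2)) := by
  obtain ⟨he0, he1⟩ := he
  set f : ℝ → ℝ := fun s => ((1 + e * Real.cos s) ^ 2)⁻¹ with hf
  have hpos : ∀ s, 0 < 1 + e * Real.cos s := by
    intro s
    nlinarith [Real.neg_one_le_cos s, Real.cos_le_one s]
  have hdenc0 : Continuous fun x : ℝ => 1 + e * Real.cos x :=
    continuous_const.add (continuous_const.mul Real.continuous_cos)
  have hfc : Continuous f :=
    (hdenc0.pow 2).inv₀ fun s => pow_ne_zero 2 (hpos s).ne'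
  have hfi : ∀ a b : ℝ, IntervalIntegrable f MeasureTheory.volume a b :=
    fun a b => hfc.intervalIntegrable a b
  set c : ℝ := 1 - e ^ 2 with hcdef
  have hc : 0 < c := by simp only [hcdef]; nlinarith
  have hsc : 0 < Real.sqrt c := Real.sqrt_pos.mpr hc
  have hscsq : Real.sqrt c * Real.sqrt c = c := Real.mul_self_sqrt hc.le
  -- the antiderivative of f
  set F : ℝ → ℝ := fun θ =>
    (Real.arccos ((e + Real.cos θ) / (1 + e * Real.cos θ)) / Real.sqrt c
      - e * Real.sin θ / (1 + e * Real.cos θ)) / c with hFdef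
  have halg : ∀ q cc dd sθ x : ℝ, 0 < q → 0 < dd → sθ ≠ 0 → cc = q*q → dd = 1+e*x →
      cc = 1-e^2 →
      (dd^2)⁻¹ = (-(1/(q*sθ/dd)) * (-(sθ*cc)/dd^2)/q - e*(x+e)/dd^2)/cc := by
    intro q cc dd sθ x hq hdd hsθ h1 h2 h3
    subst h1 h2
    field_simp
    linear_combination h3
  have hdenc : Continuous fun x : ℝ => 1 + e * Real.cos x :=
    continuous_const.add (continuous_const.mul Real.continuous_cos)
  have hFderiv : ∀ θ ∈ Set.Ioo (0:ℝ) Real.pi, HasDerivAt F (f θ) θ := by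
    intro θ hθ
    have hsin : 0 < Real.sin θ := Real.sin_pos_of_pos_of_lt_pi hθ.1 hθ.2
    have hpyth := Real.sin_sq_add_cos_sq θ
    have hcos1 : Real.cos θ < 1 := by nlinarith [Real.cos_le_one θ]
    have hcosm1 : -1 < Real.cos θ := by nlinarith [Real.neg_one_le_cos θ]
    have hd0 : (0:ℝ) < 1 + e * Real.cos θ := hpos θ
    set d : ℝ := 1 + e * Real.cos θ with hd
    set u : ℝ := (e + Real.cos θ) / d with hu
    have hu1 : u < 1 := by
      rw [hu, div_lt_one hd0]; simp only [hd]; nlinarith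
    have hum1 : -1 < u := by
      rw [hu, lt_div_iff₀ hd0]; simp only [hd]; nlinarith
    have hdu : HasDerivAt (fun x => (e + Real.cos x) / (1 + e * Real.cos x))
        ((-Real.sin θ * d - (e + Real.cos θ) * (e * -Real.sin θ)) / d ^ 2) θ := by
      apply HasDerivAt.div
      · simpa using (Real.hasDerivAt_cos θ).const_add e
      · simpa using ((Real.hasDerivAt_cos θ).const_mul e).const_add 1
      · exact hd0.ne'
    have husq : 1 - u ^ 2 = c * Real.sin θ ^ 2 / d ^ 2 := by
      rw [hu, div_pow, eq_div_iff (by positivity), hcdef]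
      simp only [hd]
      have := (hpos θ).ne'
      field_simp
      nlinarith
    have hsqrt : Real.sqrt (1 - u ^ 2) = Real.sqrt c * Real.sin θ / d := by
      rw [husq, Real.sqrt_div (by positivity), Real.sqrt_mul hc.le,
        Real.sqrt_sq hsin.le, Real.sqrt_sq hd0.le]
    have harc : HasDerivAt (fun x => Real.arccos ((e + Real.cos x) / (1 + e * Real.cos x)))
        (-(1 / Real.sqrt (1 - u ^ 2)) *
          ((-Real.sin θ * d - (e + Real.cos θ) * (e * -Real.sin θ)) / d ^ 2)) θ :=
      by have := (Real.hasDerivAt_arccos hum1.ne' hu1.ne).comp θ hdu; exact this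
    have hsnd : HasDerivAt (fun x => e * Real.sin x / (1 + e * Real.cos x))
        ((e * Real.cos θ * d - e * Real.sin θ * (e * -Real.sin θ)) / d ^ 2) θ := by
      apply HasDerivAt.div
      · simpa using (Real.hasDerivAt_sin θ).const_mul e
      · simpa using ((Real.hasDerivAt_cos θ).const_mul e).const_add 1
      · exact hd0.ne'
    have hFd : HasDerivAt F
        (((-(1 / Real.sqrt (1 - u ^ 2)) *
            ((-Real.sin θ * d - (e + Real.cos θ) * (e * -Real.sin θ)) / d ^ 2)) / Real.sqrt c
          - (e * Real.cos θ * d - e * Real.sin θ * (e * -Real.sin θ)) / d ^ 2) / c) θ :=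
      ((harc.div_const _).sub hsnd).div_const _
    have hnum1 : -Real.sin θ * d - (e + Real.cos θ) * (e * -Real.sin θ)
        = -(Real.sin θ * c) := by
      rw [hd, hcdef]; ring
    have hnum2 : e * Real.cos θ * d - e * Real.sin θ * (e * -Real.sin θ)
        = e * (Real.cos θ + e) := by
      rw [hd]; nlinarith
    rw [hsqrt, hnum1, hnum2] at hFd
    have hfθ : f θ = (d ^ 2)⁻¹ := rfl
    have := halg (Real.sqrt c) c d (Real.sin θ) (Real.cos θ) hsc hd0 hsin.ne'
      hscsq.symm hd hcdef
    rw [show f θ = (d ^ 2)⁻¹ from rfl, this]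
    exact hFd
  have hFcont : ContinuousOn F (Set.Icc 0 Real.pi) := by
    apply Continuous.continuousOn
    exact (((Real.continuous_arccos.comp
        ((continuous_const.add Real.continuous_cos).div hdenc0 fun x => (hpos x).ne')).div_const _).sub
      ((continuous_const.mul Real.continuous_sin).div hdenc0 fun x => (hpos x).ne')).div_const _
  have hI : (∫ s in (0:ℝ)..Real.pi, f s) = Real.pi / (c * Real.sqrt c) := by
    rw [intervalIntegral.integral_eq_sub_of_hasDerivAt_of_le Real.pi_pos.le hFcont hFderiv
      (hfi 0 Real.pi)]
    rw [hFdef]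
    simp only [Real.cos_pi, Real.sin_pi, Real.cos_zero, Real.sin_zero]
    rw [show (e + -1) / (1 + e * -1) = -1 by
      rw [div_eq_iff (by nlinarith : (1:ℝ) + e * -1 ≠ 0)]; ring]
    rw [show (e + 1) / (1 + e * 1) = 1 by
      rw [div_eq_one_iff_eq (by nlinarith : (1:ℝ) + e * 1 ≠ 0)]; ring]
    rw [Real.arccos_neg_one, Real.arccos_one]
    rw [mul_comm c (Real.sqrt c), ← div_div]
    norm_num
  -- symmetry inequality for the inner integral
  have hkey : ∀ θ ∈ Set.Icc (0:ℝ) Real.pi,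
      (∫ s in (0:ℝ)..θ, f s) + (∫ s in (0:ℝ)..(Real.pi - θ), f s)
        ≤ Real.pi / (c * Real.sqrt c) := by
    intro θ hθ
    have hsub : (∫ s in (0:ℝ)..θ, f (Real.pi - s)) = ∫ s in (Real.pi - θ)..Real.pi, f s := by
      simpa using intervalIntegral.integral_comp_sub_left f Real.pi (a := 0) (b := θ)
    have hfπ : ∀ s, f (Real.pi - s) = ((1 - e * Real.cos s) ^ 2)⁻¹ := by
      intro s
      simp only [hf, Real.cos_pi_sub]
      ring_nf
    have hfπc : Continuous fun s => f (Real.pi - s) := hfc.comp (continuous_const.sub continuous_id)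
    have hstep : (∫ s in (0:ℝ)..θ, f s) ≤ ∫ s in (0:ℝ)..θ, f (Real.pi - s) := by
      rcases le_or_gt θ (Real.pi / 2) with hhalf | hhalf
      · apply intervalIntegral.integral_mono_on hθ.1 (hfi 0 θ)
          (hfπc.intervalIntegrable 0 θ)
        intro s hs
        rw [hfπ s]; simp only [hf]
        have hcs : 0 ≤ Real.cos s :=
          Real.cos_nonneg_of_mem_Icc ⟨by linarith [hs.1, Real.pi_pos], by linarith [hs.2]⟩
        have h1 : 0 < 1 - e * Real.cos s := by
          nlinarith [Real.cos_le_one s]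
        apply inv_anti₀ (by positivity)
        nlinarith
      · have hθπ := hθ.2
        have e1 : (∫ s in (0:ℝ)..θ, f s)
            = (∫ s in (0:ℝ)..Real.pi, f s) - ∫ s in θ..Real.pi, f s := by
          rw [← intervalIntegral.integral_add_adjacent_intervals (hfi 0 θ) (hfi θ Real.pi)]
          ring
        have e2 : (∫ s in (0:ℝ)..θ, f (Real.pi - s))
            = (∫ s in (0:ℝ)..Real.pi, f (Real.pi - s)) - ∫ s in θ..Real.pi, f (Real.pi - s) := by
          rw [← intervalIntegral.integral_add_adjacent_intervals
            (hfπc.intervalIntegrable 0 θ) (hfπc.intervalIntegrable θ Real.pi)]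
          ring
        have e3 : (∫ s in (0:ℝ)..Real.pi, f (Real.pi - s)) = ∫ s in (0:ℝ)..Real.pi, f s := by
          simpa using intervalIntegral.integral_comp_sub_left f Real.pi (a := 0) (b := Real.pi)
        have e4 : (∫ s in θ..Real.pi, f (Real.pi - s)) ≤ ∫ s in θ..Real.pi, f s := by
          apply intervalIntegral.integral_mono_on hθπ (hfπc.intervalIntegrable θ Real.pi)
            (hfi θ Real.pi)
          intro s hs
          rw [hfπ s]; simp only [hf]
          have hcs : Real.cos s ≤ 0 := by
            apply Real.cos_nonpos_of_pi_div_two_le_of_le (by linarith [hs.1])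
            linarith [hs.2, Real.pi_pos]
          have h1 : 0 < 1 + e * Real.cos s := hpos s
          apply inv_anti₀ (by positivity)
          nlinarith
        rw [e1, e2, e3]
        linarith
    have hadd : (∫ s in (0:ℝ)..(Real.pi - θ), f s) + (∫ s in (Real.pi - θ)..Real.pi, f s)
        = ∫ s in (0:ℝ)..Real.pi, f s :=
      intervalIntegral.integral_add_adjacent_intervals (hfi 0 _) (hfi _ Real.pi)
    rw [← hI, ← hadd]
    rw [hsub] at hstep
    linarith
  -- the outer integral
  set G : ℝ → ℝ := fun θ => ∫ s in (0:ℝ)..θ, f s with hG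
  have hGcont : Continuous G := intervalIntegral.continuous_primitive hfi 0
  have hGrefl : (∫ θ in (0:ℝ)..Real.pi, G (Real.pi - θ)) = ∫ θ in (0:ℝ)..Real.pi, G θ := by
    simpa using intervalIntegral.integral_comp_sub_left G Real.pi (a := 0) (b := Real.pi)
  have hGi : IntervalIntegrable G MeasureTheory.volume 0 Real.pi :=
    hGcont.intervalIntegrable 0 Real.pi
  have hGπi : IntervalIntegrable (fun θ => G (Real.pi - θ)) MeasureTheory.volume 0 Real.pi :=
    (hGcont.comp (continuous_const.sub continuous_id)).intervalIntegrable 0 Real.pi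
  have hmono : (∫ θ in (0:ℝ)..Real.pi, (G θ + G (Real.pi - θ)))
      ≤ ∫ θ in (0:ℝ)..Real.pi, Real.pi / (c * Real.sqrt c) := by
    apply intervalIntegral.integral_mono_on Real.pi_pos.le (hGi.add hGπi)
      (intervalIntegrable_const)
    intro θ hθ
    exact hkey θ hθ
  rw [intervalIntegral.integral_add hGi hGπi, hGrefl,
    intervalIntegral.integral_const] at hmono
  have hGgoal : (∫ θ in (0:ℝ)..Real.pi, ∫ s in (0:ℝ)..θ, ((1 + e * Real.cos s) ^ 2)⁻¹)
      = ∫ θ in (0:ℝ)..Real.pi, G θ := rfl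
  rw [hGgoal]
  have hrpow : c ^ ((3:ℝ)/2) = c * Real.sqrt c := by
    rw [show (3:ℝ)/2 = 1 + 1/2 by norm_num, Real.rpow_add hc, Real.rpow_one,
      ← Real.sqrt_eq_rpow]
  rw [hrpow]
  have h2 : Real.pi ^ 2 / (2 * (c * Real.sqrt c))
      = (Real.pi - 0) • (Real.pi / (c * Real.sqrt c)) / 2 := by
    rw [smul_eq_mul]
    field_simp
    ring
  rw [h2]
  linarith
end

section
/- Suppose 𝒩 is a 2n×2n real matrix with 𝒩J = -J𝒩 (anti-symplectic), 𝒩 orthogonal, and 𝒩² = I, and B : [0,T] → Sym(2n,ℝ) is continuous with 𝒩 B(t) 𝒩 = B(T - t) for all t. Define g on the space E(S) = {z ∈ W^{1,2}([0,T];ℂ^{2n}) : z(0) = S z(T)} (where S is symplectic orthogonal with 𝒩Sᵀ = S𝒩) by (gz)(t) = 𝒩 z(T-t). Then g maps E(S) to E(S), g² = id, and the operator (A - B)z = -J z' - B(·)z satisfies (A-B)(gz) = g((A-B)z), so A - B is invariant on the ±1 eigenspaces of g. -/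
open Matrix

/-- Complexification of a real matrix. -/
noncomputable def cmap {m : Type*} (M : Matrix m m ℝ) : Matrix m m ℂ :=
  M.map (fun a => (a : ℂ))

/-- The `ℤ₂`-symmetry `(g z)(t) = 𝒩 z(T - t)`. -/
noncomputable def gop {m : Type*} [Fintype m] (N : Matrix m m ℝ) (T : ℝ)
    (z : ℝ → m → ℂ) : ℝ → m → ℂ :=
  fun t => (cmap N).mulVec (z (T - t))

/-- The operator `(A - B) z = -J z' - B(·) z`. -/
noncomputable def ABop {m : Type*} [Fintype m] (J : Matrix m m ℝ)
    (B : ℝ → Matrix m m ℝ) (z : ℝ → m → ℂ) : ℝ → m → ℂ :=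
  fun t => -((cmap J).mulVec (deriv z t)) - (cmap (B t)).mulVec (z t)

lemma cmap_mul {m : Type*} [Fintype m] (M P : Matrix m m ℝ) :
    cmap (M * P) = cmap M * cmap P := by
  ext i j
  simp [cmap, Matrix.mul_apply]

lemma cmap_neg {m : Type*} (M : Matrix m m ℝ) : cmap (-M) = -cmap M := by
  ext i j; simp [cmap]

lemma cmap_one {m : Type*} [Fintype m] [DecidableEq m] :
    cmap (1 : Matrix m m ℝ) = 1 := by
  ext i j
  simp [cmap, Matrix.one_apply]
  split <;> simp

lemma deriv_gop {m : Type*} [Fintype m] (N : Matrix m m ℝ) (T : ℝ)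
    (z : ℝ → m → ℂ) (hz : Differentiable ℝ z) (t : ℝ) :
    deriv (gop N T z) t = (cmap N).mulVec (-(deriv z (T - t))) := by
  have hrefl : HasDerivAt (fun s : ℝ => T - s) (-1) t := by
    simpa using (hasDerivAt_id t).const_sub T
  have h1 : HasDerivAt (fun s => z (T - s)) ((-1 : ℝ) • deriv z (T - t)) t :=
    ((hz (T - t)).hasDerivAt).scomp t hrefl
  set clm : (m → ℂ) →L[ℝ] (m → ℂ) :=
    LinearMap.toContinuousLinearMap ((Matrix.mulVecLin (cmap N)).restrictScalars ℝ) with hclm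
  have h2 : HasDerivAt (gop N T z) (clm ((-1 : ℝ) • deriv z (T - t))) t :=
    clm.hasFDerivAt.comp_hasDerivAt t h1
  rw [h2.deriv]
  simp [hclm, Matrix.mulVecLin]

/-- For an anti-symplectic orthogonal involution `𝒩` and a continuous symmetric path
`B(t)` with `𝒩 B(t) 𝒩 = B(T-t)`, the map `(g z)(t) = 𝒩 z(T - t)` preserves the
boundary condition `z(0) = S z(T)`, satisfies `g² = id`, and commutes with the
operator `(A - B) z = -J z' - B z`. -/
theorem stmt8 {n : ℕ} (T : ℝ)
    (J N S : Matrix (Fin n ⊕ Fin n) (Fin n ⊕ Fin n) ℝ)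
    (hJ : J = Matrix.fromBlocks 0 (-1) 1 0)
    (hNJ : N * J = -(J * N)) (hNorth : Nᵀ * N = 1) (hN2 : N * N = 1)
    (hSsp : Sᵀ * J * S = J) (hSorth : Sᵀ * S = 1) (hNS : N * Sᵀ = S * N)
    (B : ℝ → Matrix (Fin n ⊕ Fin n) (Fin n ⊕ Fin n) ℝ)
    (hBcont : ∀ i j, Continuous fun t => B t i j)
    (hBsym : ∀ t, (B t)ᵀ = B t)
    (hBrev : ∀ t, N * B t * N = B (T - t)) :
    (∀ z : ℝ → (Fin n ⊕ Fin n) → ℂ,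
        z 0 = (cmap S).mulVec (z T) → gop N T z 0 = (cmap S).mulVec (gop N T z T)) ∧
    (∀ z : ℝ → (Fin n ⊕ Fin n) → ℂ, gop N T (gop N T z) = z) ∧
    (∀ z : ℝ → (Fin n ⊕ Fin n) → ℂ, Differentiable ℝ z →
        ∀ t, ABop J B (gop N T z) t = gop N T (ABop J B z) t) := by
  -- S⁻¹ = Sᵀ facts
  have hSNS : S * N * S = N := by
    calc S * N * S = N * Sᵀ * S := by rw [← hNS]
    _ = N * (Sᵀ * S) := by rw [Matrix.mul_assoc]
    _ = N := by rw [hSorth, Matrix.mul_one]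
  refine ⟨?_, ?_, ?_⟩
  · intro z hz
    show (cmap N).mulVec (z (T - 0)) = (cmap S).mulVec ((cmap N).mulVec (z (T - T)))
    simp only [sub_zero, sub_self, hz]
    rw [Matrix.mulVec_mulVec, Matrix.mulVec_mulVec, ← cmap_mul, ← cmap_mul, hSNS]
  · intro z
    funext t
    show (cmap N).mulVec ((cmap N).mulVec (z (T - (T - t)))) = z t
    rw [Matrix.mulVec_mulVec, ← cmap_mul, hN2, cmap_one, Matrix.one_mulVec,
      sub_sub_cancel]
  · intro z hz t
    show -((cmap J).mulVec (deriv (gop N T z) t)) - (cmap (B t)).mulVec ((cmap N).mulVec (z (T - t)))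
      = (cmap N).mulVec (-((cmap J).mulVec (deriv z (T - t))) - (cmap (B (T - t))).mulVec (z (T - t)))
    rw [deriv_gop N T z hz t]
    have h1 : J * N = -(N * J) := by rw [hNJ, neg_neg]
    have h2 : B t * N = N * B (T - t) := by
      rw [← hBrev t]
      calc B t * N = (N * N) * B t * N := by rw [hN2, Matrix.one_mul]
      _ = N * (N * B t * N) := by rw [Matrix.mul_assoc, Matrix.mul_assoc, Matrix.mul_assoc]
    have hc1 : cmap J * cmap N = -(cmap N * cmap J) := by
      rw [← cmap_mul, ← cmap_mul, ← cmap_neg, h1]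
    have hc2 : cmap (B t) * cmap N = cmap N * cmap (B (T - t)) := by
      rw [← cmap_mul, ← cmap_mul, h2]
    simp [Matrix.mulVec_neg, Matrix.mulVec_sub, Matrix.mulVec_mulVec,
      Matrix.neg_mulVec, hc1, hc2]
end

section
/- The 4×4 matrix-valued map 𝔸⁻(θ) = [[R(-θ)r(θ), R(-θ)r'(θ)],[0, R(-θ)/r(θ)]], where r(θ) = 1/(1+e cos θ) and R(θ) is rotation by θ, is symplectic for every θ: 𝔸⁻(θ)ᵀ J 𝔸⁻(θ) = J. -/
open Matrix

/-- The 2×2 rotation matrix. -/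
noncomputable def Rot (θ : ℝ) : Matrix (Fin 2) (Fin 2) ℝ :=
  !![Real.cos θ, -Real.sin θ; Real.sin θ, Real.cos θ]

/-- `r(θ) = 1/(1 + e cos θ)`. -/
noncomputable def rfun (e θ : ℝ) : ℝ := 1 / (1 + e * Real.cos θ)

lemma Rot_orth (θ : ℝ) : (Rot θ)ᵀ * Rot θ = 1 := by
  ext i j
  fin_cases i <;> fin_cases j <;>
    simp [Rot, Matrix.mul_apply, Fin.sum_univ_two, Matrix.one_apply,
      Matrix.vecHead, Matrix.vecTail] <;>
    nlinarith [Real.sin_sq_add_cos_sq θ]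

lemma rfun_ne (e : ℝ) (he : e ∈ Set.Ico (0:ℝ) 1) (θ : ℝ) : rfun e θ ≠ 0 := by
  have h1 : (1:ℝ) + e * Real.cos θ > 0 := by
    nlinarith [Real.neg_one_le_cos θ, Real.cos_le_one θ, he.1, he.2]
  simp [rfun]
  positivity

/-- The matrix `𝔸⁻(θ) = [[R(-θ)r(θ), R(-θ)r'(θ)],[0, R(-θ)/r(θ)]]` is symplectic:
`𝔸⁻(θ)ᵀ J 𝔸⁻(θ) = J`. -/
theorem stmt15 (e : ℝ) (he : e ∈ Set.Ico (0:ℝ) 1) (θ : ℝ) :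
    (Matrix.fromBlocks (rfun e θ • Rot (-θ)) (deriv (rfun e) θ • Rot (-θ)) 0
        ((rfun e θ)⁻¹ • Rot (-θ)))ᵀ *
      Matrix.fromBlocks 0 (-1) 1 0 *
      Matrix.fromBlocks (rfun e θ • Rot (-θ)) (deriv (rfun e) θ • Rot (-θ)) 0
        ((rfun e θ)⁻¹ • Rot (-θ)) =
    Matrix.fromBlocks 0 (-1) 1 0 := by
  have hr := rfun_ne e he θ
  have ho := Rot_orth (-θ)
  set r := rfun e θ
  set d := deriv (rfun e) θ
  simp only [Matrix.fromBlocks_transpose, Matrix.fromBlocks_multiply,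
    Matrix.transpose_smul, Matrix.mul_smul, Matrix.smul_mul, Matrix.mul_zero,
    Matrix.zero_mul, Matrix.mul_one, Matrix.one_mul, Matrix.mul_neg, Matrix.neg_mul,
    Matrix.transpose_zero, add_zero, zero_add, smul_zero, smul_neg, ho,
    smul_smul, mul_inv_cancel₀ hr, inv_mul_cancel₀ hr, one_smul, neg_zero]
  rw [show (d * r⁻¹) • (1 : Matrix (Fin 2) (Fin 2) ℝ) + -((r⁻¹ * d) • 1) = 0 by
    rw [mul_comm d r⁻¹]; simp]
end
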